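/- Let d₁, α₁, α₃, α₄ be reals and set α₂ = 0, β₁ = −16d₁ + α₃, β₃ = 2α₁α₃(α₃ − 2(4+α₄))/((α₃−8)(40d₁+6α₁−α₃)), d₃ = (α₃ − 2α₄ − 2β₃)/8, κ₁ = α₁(α₃−24)(α₃−6)/(α₄(α₃−8)(α₃−40d₁)), κ₂ = (α₃(6−α₃+2α₄)/(α₁(α₃−6)))·κ₁ (assume all denominators nonzero). Then u(t,x) = ¼(1−tanh(x−(α₃/4)t))², v(t,x) = 1 + ((24−α₃)/(2(α₃−8)))(1−tanh²(x−(α₃/4)t)), w(t,x) = ((α₃−40d₁)/(4α₁))(1−tanh²(x−(α₃/4)t)) is an exact solution of the system u_t = d₁u_xx + β₁u(1−u) − α₁uw + α₂uv, v_t = v_xx + v(1−v) + (κ₁α₃+κ₂α₁)uw − (κ₂α₂u+κ₁α₄w)v, w_t = d₃w_xx + β₃w(1−w) − α₃uw + α₄vw. -/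

import Mathlib

open Real

noncomputable def pdt (f : ℝ → ℝ → ℝ) (t x : ℝ) : ℝ := deriv (fun s => f s x) t

noncomputable def pdxx (f : ℝ → ℝ → ℝ) (t x : ℝ) : ℝ := deriv (deriv (f t)) x

/-- The rescaled language-competition system (1-4). -/
def LangSys (d₁ d₃ β₁ β₃ α₁ α₂ α₃ α₄ κ₁ κ₂ : ℝ) (u v w : ℝ → ℝ → ℝ) : Prop :=
  ∀ t x : ℝ,
    pdt u t x = d₁ * pdxx u t x + β₁ * u t x * (1 - u t x)
        - α₁ * u t x * w t x + α₂ * u t x * v t x ∧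
    pdt v t x = pdxx v t x + v t x * (1 - v t x)
        + (κ₁ * α₃ + κ₂ * α₁) * u t x * w t x
        - (κ₂ * α₂ * u t x + κ₁ * α₄ * w t x) * v t x ∧
    pdt w t x = d₃ * pdxx w t x + β₃ * w t x * (1 - w t x)
        - α₃ * u t x * w t x + α₄ * v t x * w t x


/-!
All three components are polynomials in `T = tanh (x - μ t)`. Since `tanh' = 1 - tanh ^ 2`,
every derivative of such a function is again a polynomial in `T`, so each equation of the
system becomes a polynomial identity in `T` whose coefficients are rational functions of the
parameters; it holds after clearing the (nonzero) denominators.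
-/

theorem Real.hasDerivAt_tanh (x : ℝ) : HasDerivAt tanh (1 - tanh x ^ 2) x := by
  have hquot := (hasDerivAt_sinh x).div (hasDerivAt_cosh x) (cosh_pos x).ne'
  rw [show sinh / cosh = tanh from funext fun y => (tanh_eq_sinh_div_cosh y).symm] at hquot
  refine hquot.congr_deriv ?_
  rw [tanh_eq_sinh_div_cosh]
  field_simp

theorem pdt_comp_sub_mul {g : ℝ → ℝ} {g' μ t x : ℝ} (hg : HasDerivAt g g' (x - μ * t)) :
    pdt (fun t x => g (x - μ * t)) t x = -μ * g' := by
  have hξ : HasDerivAt (fun s => x - μ * s) (-μ) t := by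
    simpa using ((hasDerivAt_id t).const_mul μ).const_sub x
  have hcomp : HasDerivAt (fun s => g (x - μ * s)) (g' * -μ) t := hg.comp t hξ
  rw [pdt, hcomp.deriv, mul_comm]

theorem pdxx_comp_sub_mul (g : ℝ → ℝ) (μ t x : ℝ) :
    pdxx (fun t x => g (x - μ * t)) t x = deriv (deriv g) (x - μ * t) := by
  have hshift (f : ℝ → ℝ) : deriv (fun y => f (y - μ * t)) = fun y => deriv f (y - μ * t) :=
    funext fun y => deriv_comp_sub_const f (μ * t) y
  rw [pdxx, hshift, hshift]

open Polynomial

noncomputable def tanhDerivative (p : ℝ[X]) : ℝ[X] := derivative p * (1 - X ^ 2)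

theorem hasDerivAt_eval_tanh (p : ℝ[X]) (x : ℝ) :
    HasDerivAt (fun x => p.eval (tanh x)) ((tanhDerivative p).eval (tanh x)) x := by
  rw [tanhDerivative, eval_mul, eval_sub, eval_one, eval_pow, eval_X]
  exact (p.hasDerivAt (tanh x)).comp x (Real.hasDerivAt_tanh x)

theorem deriv_eval_tanh (p : ℝ[X]) :
    deriv (fun x => p.eval (tanh x)) = fun x => (tanhDerivative p).eval (tanh x) :=
  funext fun x => (hasDerivAt_eval_tanh p x).deriv

theorem pdt_eval_tanh (p : ℝ[X]) (μ t x : ℝ) :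
    pdt (fun t x => p.eval (tanh (x - μ * t))) t x
      = -μ * (tanhDerivative p).eval (tanh (x - μ * t)) :=
  pdt_comp_sub_mul (hasDerivAt_eval_tanh p _)

theorem pdxx_eval_tanh (p : ℝ[X]) (μ t x : ℝ) :
    pdxx (fun t x => p.eval (tanh (x - μ * t))) t x
      = (tanhDerivative (tanhDerivative p)).eval (tanh (x - μ * t)) := by
  rw [pdxx_comp_sub_mul (fun y => p.eval (tanh y)), deriv_eval_tanh, deriv_eval_tanh]

theorem exact_solution_2_12
    (d₁ α₁ α₃ α₄ α₂ β₁ β₃ d₃ κ₁ κ₂ : ℝ)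
    (hα₁ : α₁ ≠ 0) (hα₄ : α₄ ≠ 0)
    (h8 : α₃ - 8 ≠ 0) (h6 : α₃ - 6 ≠ 0)
    (hden₁ : 40 * d₁ + 6 * α₁ - α₃ ≠ 0)
    (hden₂ : α₃ - 40 * d₁ ≠ 0)
    (hα₂ : α₂ = 0)
    (hβ₁ : β₁ = -16 * d₁ + α₃)
    (hβ₃ : β₃ = 2 * α₁ * α₃ * (α₃ - 2 * (4 + α₄)) /
        ((α₃ - 8) * (40 * d₁ + 6 * α₁ - α₃)))
    (hd₃ : d₃ = (α₃ - 2 * α₄ - 2 * β₃) / 8)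
    (hκ₁ : κ₁ = α₁ * (α₃ - 24) * (α₃ - 6) /
        (α₄ * (α₃ - 8) * (α₃ - 40 * d₁)))
    (hκ₂ : κ₂ = α₃ * (6 - α₃ + 2 * α₄) / (α₁ * (α₃ - 6)) * κ₁) :
    LangSys d₁ d₃ β₁ β₃ α₁ α₂ α₃ α₄ κ₁ κ₂
      (fun t x => 1 / 4 * (1 - Real.tanh (x - α₃ / 4 * t)) ^ 2)
      (fun t x => 1 + (24 - α₃) / (2 * (α₃ - 8)) *
          (1 - Real.tanh (x - α₃ / 4 * t) ^ 2))
      (fun t x => (α₃ - 40 * d₁) / (4 * α₁) *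
          (1 - Real.tanh (x - α₃ / 4 * t) ^ 2)) := by
  have hu : (fun t x => 1 / 4 * (1 - tanh (x - α₃ / 4 * t)) ^ 2)
      = fun t x => (C (1 / 4 : ℝ) * (1 - X) ^ 2).eval (tanh (x - α₃ / 4 * t)) := by
    simp
  have hv : (fun t x => 1 + (24 - α₃) / (2 * (α₃ - 8)) * (1 - tanh (x - α₃ / 4 * t) ^ 2))
      = fun t x => (1 + C ((24 - α₃) / (2 * (α₃ - 8))) * (1 - X ^ 2)).eval
          (tanh (x - α₃ / 4 * t)) := by
    simp
  have hw : (fun t x => (α₃ - 40 * d₁) / (4 * α₁) * (1 - tanh (x - α₃ / 4 * t) ^ 2))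
      = fun t x => (C ((α₃ - 40 * d₁) / (4 * α₁)) * (1 - X ^ 2)).eval (tanh (x - α₃ / 4 * t)) := by
    simp
  subst hα₂ hβ₁ hd₃ hβ₃ hκ₂ hκ₁
  rw [hu, hv, hw]
  intro t x
  simp only [pdt_eval_tanh, pdxx_eval_tanh]
  simp only [tanhDerivative, eval_mul, eval_add, eval_sub, eval_pow, eval_C, eval_X, eval_one,
    eval_zero, derivative_mul, derivative_add, derivative_sub, derivative_pow, derivative_C,
    derivative_X, derivative_one, derivative_zero, Nat.cast_ofNat]
  generalize tanh (x - α₃ / 4 * t) = T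
  -- the form in which `field_simp` meets this denominator
  have hden₁' : 40 * d₁ + α₁ * 6 - α₃ ≠ 0 := by rwa [mul_comm α₁]
  refine ⟨?_, ?_, ?_⟩ <;> field_simp <;> ring
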